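/- Fix t ∈ ℝ and p ∈ ℝⁿ. Let v : ℝ × ℝⁿ → ℝⁿ, and let Φ : ℝ × ℝⁿ → ℝⁿ be of class C² with Φ(t,q) = q for all q and ∂Φ/∂τ(τ,q) = v(τ, Φ(τ,q)); write F(τ) := d_qΦ(τ,p) and assume F(τ) is invertible for τ near t. Let κ : ℝ × ℝⁿ → ℒ(ℝⁿ; ℝⁿ) be a time-dependent (1,1)-tensor field of class C¹. Then the map τ ↦ F(τ)⁻¹ ∘ κ(τ, Φ(τ,p)) ∘ F(τ) (the pull-back of κ by the flow) is differentiable at τ = t, and its derivative there equals (∂κ/∂t + dκ·v)(t,p) + κ(t,p)∘dv(t,p) − dv(t,p)∘κ(t,p) (the Jaumann Lie derivative Dκ/Dt + κ·dv − dv·κ). -/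

import Mathlib

/-!
At `τ = t` the flow is the identity, so `F t = 1` and the pull-back equals `κ (t, p)` there.
By the symmetry of second derivatives of the `C²` map `Φ`, `∂F/∂τ` at `t` is the spatial
differential of `∂Φ/∂τ (t, ·) = v (t, ·)`, i.e. `dv (t, p)`, and hence `F⁻¹` has derivative `-dv`.
The chain rule gives `Dκ/Dt` as the derivative of `τ ↦ κ (τ, Φ (τ, p))`, and the product rule
for `F⁻¹ * κ * F` assembles the Jaumann derivative.
-/

open ContinuousLinearMap

section Conjugation

variable {𝕜 R : Type*} [NontriviallyNormedField 𝕜] [NormedRing R] [NormedAlgebra 𝕜 R]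
  [HasSummableGeomSeries R] {F K : 𝕜 → R} {F' K' : R} {t : 𝕜}

theorem HasDerivAt.ringInverse_of_eq_one (hF : HasDerivAt F F' t) (h1 : F t = 1) :
    HasDerivAt (fun τ => Ring.inverse (F τ)) (-F') t := by
  have h := (hasFDerivAt_ringInverse (1 : Rˣ)).comp_hasDerivAt_of_eq t hF (by simp [h1])
  exact h.congr_deriv (by simp)

theorem HasDerivAt.ringInverse_mul_mul_of_eq_one (hF : HasDerivAt F F' t)
    (hK : HasDerivAt K K' t) (h1 : F t = 1) :
    HasDerivAt (fun τ => Ring.inverse (F τ) * K τ * F τ) (K' + K t * F' - F' * K t) t := by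
  have h := ((hF.ringInverse_of_eq_one h1).mul hK).mul hF
  simp only [Pi.mul_apply, h1, Ring.inverse_one, one_mul, mul_one] at h
  exact h.congr_deriv (by noncomm_ring)

end Conjugation

section Partial

variable {𝕜 E G : Type*} [NontriviallyNormedField 𝕜] [NormedAddCommGroup E] [NormedSpace 𝕜 E]
  [NormedAddCommGroup G] [NormedSpace 𝕜 G] {f : 𝕜 × E → G} {f' : 𝕜 × E →L[𝕜] G} {t : 𝕜} {y : E}

theorem HasFDerivAt.hasDerivAt_comp_prodMk_left (hf : HasFDerivAt f f' (t, y)) :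
    HasDerivAt (fun s => f (s, y)) (f' (1, 0)) t :=
  hf.comp_hasDerivAt t ((hasDerivAt_id t).prodMk (hasDerivAt_const t y))

theorem HasFDerivAt.comp_prodMk_right (hf : HasFDerivAt f f' (t, y)) :
    HasFDerivAt (fun z => f (t, z)) (f'.comp (inr 𝕜 𝕜 E)) y :=
  hf.comp y (hasFDerivAt_prodMk_right t y)

theorem DifferentiableAt.hasDerivAt_comp_prodMk {c : 𝕜 → E} {c' : E}
    (hf : DifferentiableAt 𝕜 f (t, c t)) (hc : HasDerivAt c c' t) :
    HasDerivAt (fun τ => f (τ, c τ))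
      (deriv (fun s => f (s, c t)) t + fderiv 𝕜 (fun z => f (t, z)) (c t) c') t := by
  have h := hf.hasFDerivAt.comp_hasDerivAt t ((hasDerivAt_id t).prodMk hc)
  rw [hf.hasFDerivAt.hasDerivAt_comp_prodMk_left.deriv, hf.hasFDerivAt.comp_prodMk_right.fderiv,
    comp_apply, inr_apply, ← map_add, Prod.mk_add_mk, add_zero, zero_add]
  exact h

end Partial

section Flow

variable {𝕜 E : Type*} [NontriviallyNormedField 𝕜] [IsRCLikeNormedField 𝕜]
  [NormedAddCommGroup E] [NormedSpace 𝕜 E] {Φ v : 𝕜 × E → E} {t : 𝕜}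

theorem hasDerivAt_fderiv_right_of_deriv_left_eq (hΦ : ContDiff 𝕜 2 Φ)
    (hv : ∀ q, deriv (fun s => Φ (s, q)) t = v (t, q)) (p : E) :
    HasDerivAt (fun τ => fderiv 𝕜 (fun y => Φ (τ, y)) p) (fderiv 𝕜 (fun y => v (t, y)) p) t := by
  have hΦd : Differentiable 𝕜 Φ := hΦ.differentiable two_ne_zero
  set A := fderiv 𝕜 (fderiv 𝕜 Φ) (t, p)
  have hA : HasFDerivAt (fderiv 𝕜 Φ) A (t, p) :=
    ((hΦ.fderiv_right (m := 1) le_rfl).differentiable one_ne_zero _).hasFDerivAt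
  have hF : (fun τ => fderiv 𝕜 (fun y => Φ (τ, y)) p)
      = fun τ => (fderiv 𝕜 Φ (τ, p)).comp (inr 𝕜 𝕜 E) :=
    funext fun τ => (hΦd _).hasFDerivAt.comp_prodMk_right.fderiv
  have hv' : (fun y => v (t, y)) = fun y => fderiv 𝕜 Φ (t, y) (1, 0) := funext fun y => by
    rw [← hv, (hΦd _).hasFDerivAt.hasDerivAt_comp_prodMk_left.deriv]
  have hdv : HasFDerivAt (fun y => v (t, y)) (((apply 𝕜 E (1, 0)).comp A).comp (inr 𝕜 𝕜 E)) p := by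
    rw [hv']
    exact ((apply 𝕜 E (1, 0)).hasFDerivAt.comp (t, p) hA).comp_prodMk_right
  have hFτ := ((compL 𝕜 E (𝕜 × E) E).flip (inr 𝕜 𝕜 E)).hasFDerivAt.comp_hasDerivAt t
    hA.hasDerivAt_comp_prodMk_left
  rw [hF, hdv.fderiv]
  refine hFτ.congr_deriv (ext fun x => ?_)
  simp [second_derivative_symmetric (fun z => (hΦd z).hasFDerivAt) hA (0, x) (1, 0)]

end Flow

theorem lie_derivative_mixed_tensor_pullback_general
    (n : ℕ) (t : ℝ) (p : EuclideanSpace ℝ (Fin n))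
    (v Φ : ℝ × EuclideanSpace ℝ (Fin n) → EuclideanSpace ℝ (Fin n))
    (hΦ : ContDiff ℝ 2 Φ)
    (hid : ∀ q, Φ (t, q) = q)
    (hflow : ∀ (τ : ℝ) (q : EuclideanSpace ℝ (Fin n)),
      deriv (fun s => Φ (s, q)) τ = v (τ, Φ (τ, q)))
    (F : ℝ → EuclideanSpace ℝ (Fin n) →L[ℝ] EuclideanSpace ℝ (Fin n))
    (hF : ∀ τ, F τ = fderiv ℝ (fun y => Φ (τ, y)) p)
    (κ : ℝ × EuclideanSpace ℝ (Fin n) →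
      (EuclideanSpace ℝ (Fin n) →L[ℝ] EuclideanSpace ℝ (Fin n)))
    (hκ : ContDiff ℝ 1 κ) :
    HasDerivAt (fun τ => ((Ring.inverse (F τ)).comp (κ (τ, Φ (τ, p)))).comp (F τ))
      (deriv (fun s => κ (s, p)) t
        + fderiv ℝ (fun y => κ (t, y)) p (v (t, p))
        + (κ (t, p)).comp (fderiv ℝ (fun y => v (t, y)) p)
        - (fderiv ℝ (fun y => v (t, y)) p).comp (κ (t, p))) t := by
  have hFt : F t = 1 := by
    rw [hF, funext hid]
    exact fderiv_fun_id
  have hF' : HasDerivAt F (fderiv ℝ (fun y => v (t, y)) p) t := by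
    rw [funext hF]
    exact hasDerivAt_fderiv_right_of_deriv_left_eq hΦ (fun q => by rw [hflow, hid]) p
  have hΦp : HasDerivAt (fun s => Φ (s, p)) (v (t, p)) t := by
    have h := (hΦ.differentiable two_ne_zero (t, p)).hasFDerivAt.hasDerivAt_comp_prodMk_left
      |>.differentiableAt.hasDerivAt
    rwa [hflow, hid] at h
  have hK := (hκ.differentiable one_ne_zero _).hasDerivAt_comp_prodMk hΦp
  have h := hF'.ringInverse_mul_mul_of_eq_one hK hFt
  simp only [hid] at h
  exact h

/-- **Jaumann Lie derivative of a mixed (1,1)-tensor as derivative of its pull-back.**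
If `Φ` is the flow of `v` started at time `t`, `F(τ) = d_qΦ(τ,p)` is invertible
near `t` and `κ` is a `C¹` time-dependent (1,1)-tensor field, then
`τ ↦ F(τ)⁻¹ ∘ κ(τ, Φ(τ,p)) ∘ F(τ)` is differentiable at `τ = t` with derivative
`Dκ/Dt + κ∘dv − dv∘κ` at `(t,p)`. -/
theorem lie_derivative_mixed_tensor_pullback
    (n : ℕ) (t : ℝ) (p : EuclideanSpace ℝ (Fin n))
    (v Φ : ℝ × EuclideanSpace ℝ (Fin n) → EuclideanSpace ℝ (Fin n))
    (hΦ : ContDiff ℝ 2 Φ)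
    (hid : ∀ q, Φ (t, q) = q)
    (hflow : ∀ (τ : ℝ) (q : EuclideanSpace ℝ (Fin n)),
      deriv (fun s => Φ (s, q)) τ = v (τ, Φ (τ, q)))
    (F : ℝ → EuclideanSpace ℝ (Fin n) →L[ℝ] EuclideanSpace ℝ (Fin n))
    (hF : ∀ τ, F τ = fderiv ℝ (fun y => Φ (τ, y)) p)
    (hinv : ∀ᶠ τ in nhds t, IsUnit (F τ))
    (κ : ℝ × EuclideanSpace ℝ (Fin n) →
      (EuclideanSpace ℝ (Fin n) →L[ℝ] EuclideanSpace ℝ (Fin n)))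
    (hκ : ContDiff ℝ 1 κ) :
    HasDerivAt (fun τ => ((Ring.inverse (F τ)).comp (κ (τ, Φ (τ, p)))).comp (F τ))
      (deriv (fun s => κ (s, p)) t
        + fderiv ℝ (fun y => κ (t, y)) p (v (t, p))
        + (κ (t, p)).comp (fderiv ℝ (fun y => v (t, y)) p)
        - (fderiv ℝ (fun y => v (t, y)) p).comp (κ (t, p))) t :=
  lie_derivative_mixed_tensor_pullback_general n t p v Φ hΦ hid hflow F hF κ hκ
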